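/- Let φ: [-1,1] → ℂ be a twice continuously differentiable function satisfying the Neumann boundary value problem (|k|² - d²/dz²) φ(z) = a(z) on (-1,1) with φ'(±1) = 0, where k ∈ ℤ² and a ∈ L²(-1,1). If k = 0 assume additionally ∫_{-1}^{1} φ(z) dz = 0. Then there is a constant C > 0, independent of k, such that ‖|k|² φ‖_{L²} + ‖|k| φ‖_{H¹} + ‖φ‖_{H²} ≤ C ‖a‖_{L²}. -/

import Mathlib

open Real MeasureTheory Set

noncomputable def L2norm (f : ℝ → ℂ) : ℝ :=
  Real.sqrt (∫ z in Set.Ioo (-1:ℝ) 1, ‖f z‖ ^ 2)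

noncomputable def H1norm (f : ℝ → ℂ) : ℝ :=
  Real.sqrt (∫ z in Set.Ioo (-1:ℝ) 1, (‖f z‖ ^ 2 + ‖deriv f z‖ ^ 2))

noncomputable def H2norm (f : ℝ → ℂ) : ℝ :=
  Real.sqrt (∫ z in Set.Ioo (-1:ℝ) 1,
    (‖f z‖ ^ 2 + ‖deriv f z‖ ^ 2 + ‖deriv (deriv f) z‖ ^ 2))

noncomputable def knorm (k : ℤ × ℤ) : ℝ :=
  Real.sqrt ((k.1 : ℝ) ^ 2 + (k.2 : ℝ) ^ 2)

/-!
Write `m = |k|²` and `b = m φ - φ''`, so that `b = a` on `(-1, 1)`. Testing the equation against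
`φ` and integrating by parts, the boundary terms vanish by the Neumann condition and
`m ‖φ‖² + ‖φ'‖² = Re ∫ b φ̄ ≤ ‖b‖ ‖φ‖`. For `k ≠ 0` we have `m ≥ 1`, and this energy inequality
alone bounds `m ‖φ‖` and `|k| ‖φ'‖` by `‖b‖`. For `k = 0` it only controls `‖φ'‖`, and the
mean-zero condition supplies the missing Poincaré inequality `‖φ‖ ≤ 2 ‖φ'‖`: a mean-zero function
is an average of its own differences, hence bounded by the `L¹` norm of its derivative.
Finally `‖φ''‖ ≤ m ‖φ‖ + ‖b‖` by the equation itself, which gives the estimate with `C = 7`.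
-/

open ComplexConjugate Interval

lemma Real.sqrt_add_le_sqrt_add_sqrt {x y : ℝ} (hx : 0 ≤ x) (hy : 0 ≤ y) :
    √(x + y) ≤ √x + √y := by
  rw [sqrt_le_left (by positivity)]
  nlinarith [sq_sqrt hx, sq_sqrt hy, sqrt_nonneg x, sqrt_nonneg y]

namespace MeasureTheory

variable {α E : Type*} [MeasurableSpace α] {μ : Measure α} [NormedAddCommGroup E] {f g : α → E}

lemma MemLp.toReal_eLpNorm_two (hf : MemLp f 2 μ) :
    (eLpNorm f 2 μ).toReal = √(∫ x, ‖f x‖ ^ 2 ∂μ) := by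
  rw [hf.eLpNorm_eq_integral_rpow_norm two_ne_zero ENNReal.ofNat_ne_top,
    ENNReal.toReal_ofReal (by positivity), sqrt_eq_rpow]
  norm_num

lemma integral_norm_mul_norm_le_sqrt_mul_sqrt (hf : MemLp f 2 μ) (hg : MemLp g 2 μ) :
    ∫ x, ‖f x‖ * ‖g x‖ ∂μ ≤ √(∫ x, ‖f x‖ ^ 2 ∂μ) * √(∫ x, ‖g x‖ ^ 2 ∂μ) := by
  have := integral_mul_norm_le_Lp_mul_Lq Real.HolderConjugate.two_two
    (by simpa using hf) (by simpa using hg)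
  simpa [sqrt_eq_rpow] using this

lemma sqrt_integral_norm_sub_sq_le (hf : MemLp f 2 μ) (hg : MemLp g 2 μ) :
    √(∫ x, ‖f x - g x‖ ^ 2 ∂μ) ≤ √(∫ x, ‖f x‖ ^ 2 ∂μ) + √(∫ x, ‖g x‖ ^ 2 ∂μ) := by
  have hsub := (hf.sub hg).toReal_eLpNorm_two
  simp only [Pi.sub_apply] at hsub
  rw [← hf.toReal_eLpNorm_two, ← hg.toReal_eLpNorm_two, ← hsub,
    ← ENNReal.toReal_add hf.eLpNorm_ne_top hg.eLpNorm_ne_top]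
  exact ENNReal.toReal_mono (by finiteness) (eLpNorm_sub_le hf.1 hg.1 one_le_two)

end MeasureTheory

lemma Continuous.memLp_restrict_Ioo {E : Type*} [NormedAddCommGroup E] {f : ℝ → E}
    (hf : Continuous f) (p : ENNReal) (a b : ℝ) : MemLp f p (volume.restrict (Ioo a b)) := by
  obtain ⟨C, hC⟩ := (isCompact_Icc (a := a) (b := b)).exists_bound_of_continuousOn hf.continuousOn
  refine MemLp.of_bound hf.aestronglyMeasurable C ?_
  filter_upwards [ae_restrict_mem measurableSet_Ioo] with x hx
  exact hC x (Ioo_subset_Icc_self hx)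

lemma Continuous.integrableOn_Ioo {E : Type*} [NormedAddCommGroup E] {f : ℝ → E}
    (hf : Continuous f) {a b : ℝ} : IntegrableOn f (Ioo a b) :=
  hf.integrableOn_Icc.mono_set Ioo_subset_Icc_self

section Poincare

variable {E : Type*} [NormedAddCommGroup E] [NormedSpace ℝ E] [CompleteSpace E] {f : ℝ → E}
  {a b : ℝ}

lemma norm_sub_le_integral_norm_deriv (hf : ContDiff ℝ 1 f) {x y : ℝ} (hx : x ∈ Icc a b)
    (hy : y ∈ Icc a b) : ‖f x - f y‖ ≤ ∫ z in Ioo a b, ‖deriv f z‖ := by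
  have hf' := hf.continuous_deriv le_rfl
  rw [← intervalIntegral.integral_eq_sub_of_hasDerivAt
    (fun t _ => (hf.differentiable one_ne_zero t).hasDerivAt) (hf'.intervalIntegrable y x)]
  calc _ ≤ ∫ z in Ι y x, ‖deriv f z‖ := intervalIntegral.norm_integral_le_integral_norm_uIoc
    _ ≤ ∫ z in Icc a b, ‖deriv f z‖ :=
      setIntegral_mono_set hf'.norm.integrableOn_Icc (ae_of_all _ fun _ => norm_nonneg _)
        (uIoc_subset_uIcc.trans (uIcc_subset_Icc hy hx)).eventuallyLE
    _ = _ := integral_Icc_eq_integral_Ioo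

lemma norm_le_integral_norm_deriv_of_integral_eq_zero (hf : ContDiff ℝ 1 f) (hab : a < b)
    (hmean : ∫ z in Ioo a b, f z = 0) {x : ℝ} (hx : x ∈ Icc a b) :
    ‖f x‖ ≤ ∫ z in Ioo a b, ‖deriv f z‖ := by
  have hvol : volume.real (Ioo a b) = b - a := by simp [hab.le]
  have havg : (b - a) • f x = ∫ y in Ioo a b, (f x - f y) := by
    rw [integral_sub (integrable_const (f x)) hf.continuous.integrableOn_Ioo, hmean,
      setIntegral_const, hvol, sub_zero]
  have hbound := norm_setIntegral_le_of_norm_le_const (μ := volume) measure_Ioo_lt_top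
    fun y hy => norm_sub_le_integral_norm_deriv hf hx (Ioo_subset_Icc_self hy)
  rw [← havg, hvol, norm_smul, norm_of_nonneg (sub_nonneg.2 hab.le), mul_comm] at hbound
  exact le_of_mul_le_mul_right hbound (sub_pos.2 hab)

end Poincare

section L2norm

variable {f g : ℝ → ℂ}

lemma L2norm_nonneg (f : ℝ → ℂ) : 0 ≤ L2norm f :=
  sqrt_nonneg _

lemma L2norm_sq (f : ℝ → ℂ) : L2norm f ^ 2 = ∫ z in Ioo (-1:ℝ) 1, ‖f z‖ ^ 2 :=
  sq_sqrt (integral_nonneg fun _ => by positivity)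

lemma L2norm_congr (h : EqOn f g (Ioo (-1) 1)) : L2norm f = L2norm g := by
  rw [L2norm, L2norm, setIntegral_congr_fun measurableSet_Ioo fun z hz => by rw [h hz] ]

lemma L2norm_const_mul (c : ℂ) (f : ℝ → ℂ) : L2norm (fun z => c * f z) = ‖c‖ * L2norm f := by
  simp only [L2norm, norm_mul, mul_pow, integral_const_mul, sqrt_mul (sq_nonneg _),
    sqrt_sq (norm_nonneg _)]

lemma L2norm_sub_le (hf : Continuous f) (hg : Continuous g) :
    L2norm (fun z => f z - g z) ≤ L2norm f + L2norm g :=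
  sqrt_integral_norm_sub_sq_le (hf.memLp_restrict_Ioo _ _ _) (hg.memLp_restrict_Ioo _ _ _)

lemma integral_norm_mul_norm_le_L2norm_mul (hf : Continuous f) (hg : Continuous g) :
    ∫ z in Ioo (-1:ℝ) 1, ‖f z‖ * ‖g z‖ ≤ L2norm f * L2norm g :=
  integral_norm_mul_norm_le_sqrt_mul_sqrt (hf.memLp_restrict_Ioo _ _ _)
    (hg.memLp_restrict_Ioo _ _ _)

lemma H1norm_le (hf : Continuous f) (hf' : Continuous (deriv f)) :
    H1norm f ≤ L2norm f + L2norm (deriv f) := by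
  rw [H1norm, integral_add (by fun_prop : Continuous fun z => ‖f z‖ ^ 2).integrableOn_Ioo
    (by fun_prop : Continuous fun z => ‖deriv f z‖ ^ 2).integrableOn_Ioo]
  exact sqrt_add_le_sqrt_add_sqrt (integral_nonneg fun _ => by positivity)
    (integral_nonneg fun _ => by positivity)

lemma H2norm_le (hf : Continuous f) (hf' : Continuous (deriv f))
    (hf'' : Continuous (deriv (deriv f))) :
    H2norm f ≤ L2norm f + L2norm (deriv f) + L2norm (deriv (deriv f)) := by
  rw [H2norm, integral_add
    (by fun_prop : Continuous fun z => ‖f z‖ ^ 2 + ‖deriv f z‖ ^ 2).integrableOn_Ioo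
    (by fun_prop : Continuous fun z => ‖deriv (deriv f) z‖ ^ 2).integrableOn_Ioo]
  refine (sqrt_add_le_sqrt_add_sqrt (integral_nonneg fun _ => by positivity)
    (integral_nonneg fun _ => by positivity)).trans (add_le_add_left ?_ _)
  exact H1norm_le hf hf'

lemma L2norm_le_two_mul_L2norm_deriv (hf : ContDiff ℝ 1 f)
    (hmean : ∫ z in Ioo (-1:ℝ) 1, f z = 0) : L2norm f ≤ 2 * L2norm (deriv f) := by
  have hf' := hf.continuous_deriv le_rfl
  set K := ∫ z in Ioo (-1:ℝ) 1, ‖deriv f z‖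
  have hK : K ≤ L2norm (deriv f) * √2 := by
    simpa [L2norm, one_add_one_eq_two] using
      integral_norm_mul_norm_le_L2norm_mul hf' (continuous_const (y := (1 : ℂ)))
  have hsup : ∀ z ∈ Ioo (-1:ℝ) 1, ‖f z‖ ^ 2 ≤ K ^ 2 := fun z hz =>
    pow_le_pow_left₀ (norm_nonneg _) (norm_le_integral_norm_deriv_of_integral_eq_zero hf
      (by norm_num) hmean (Ioo_subset_Icc_self hz)) 2
  rw [L2norm, sqrt_le_left (mul_nonneg zero_le_two (L2norm_nonneg _))]
  calc ∫ z in Ioo (-1:ℝ) 1, ‖f z‖ ^ 2 ≤ ∫ z in Ioo (-1:ℝ) 1, K ^ 2 :=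
        setIntegral_mono_on (by fun_prop : Continuous fun z => ‖f z‖ ^ 2).integrableOn_Ioo
          continuous_const.integrableOn_Ioo measurableSet_Ioo hsup
    _ = 2 * K ^ 2 := by norm_num
    _ ≤ 2 * (L2norm (deriv f) * √2) ^ 2 := by gcongr
    _ = (2 * L2norm (deriv f)) ^ 2 := by rw [mul_pow, mul_pow, sq_sqrt zero_le_two]; ring

end L2norm

lemma integral_conj_mul_deriv_deriv_eq_neg {φ : ℝ → ℂ} (hφ : ContDiff ℝ 2 φ) {a b : ℝ}
    (ha : deriv φ a = 0) (hb : deriv φ b = 0) :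
    ∫ x in a..b, conj (φ x) * deriv (deriv φ) x = -∫ x in a..b, ((‖deriv φ x‖ ^ 2 : ℝ) : ℂ) := by
  have hφ' : ContDiff ℝ 1 (deriv φ) := hφ.deriv'
  rw [intervalIntegral.integral_mul_deriv_eq_deriv_mul (u := fun x => conj (φ x))
    (fun x _ => ((hφ.differentiable two_ne_zero x).hasDerivAt).star)
    (fun x _ => (hφ'.differentiable one_ne_zero x).hasDerivAt)
    ((hφ.continuous_deriv one_le_two).star.intervalIntegrable _ _)
    ((hφ'.continuous_deriv le_rfl).intervalIntegrable _ _), ha, hb]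
  simp [Complex.conj_mul']

lemma neumann_energy_le {φ : ℝ → ℂ} (hφ : ContDiff ℝ 2 φ) (hl : deriv φ (-1) = 0)
    (hr : deriv φ 1 = 0) (m : ℝ) :
    m * L2norm φ ^ 2 + L2norm (deriv φ) ^ 2 ≤
      L2norm (fun z => m * φ z - deriv (deriv φ) z) * L2norm φ := by
  set b : ℝ → ℂ := fun z => m * φ z - deriv (deriv φ) z
  have hφ' := hφ.continuous_deriv one_le_two
  have hφ'' := hφ.deriv'.continuous_deriv le_rfl
  have hid : ∫ z in Ioo (-1:ℝ) 1, conj (φ z) * b z =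
      ((m * L2norm φ ^ 2 + L2norm (deriv φ) ^ 2 : ℝ) : ℂ) := by
    have hpt : ∀ z, conj (φ z) * b z =
        m * ((‖φ z‖ ^ 2 : ℝ) : ℂ) - conj (φ z) * deriv (deriv φ) z := fun z => by
      simp only [b, Complex.ofReal_pow, ← Complex.conj_mul']; ring
    have hibp := integral_conj_mul_deriv_deriv_eq_neg hφ hl hr
    simp only [intervalIntegral.integral_of_le (neg_le_self zero_le_one),
      integral_Ioc_eq_integral_Ioo] at hibp
    simp_rw [hpt]
    rw [integral_sub (Continuous.integrableOn_Ioo (by fun_prop))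
      (Continuous.integrableOn_Ioo (by fun_prop)),
      integral_const_mul, hibp, integral_complex_ofReal, integral_complex_ofReal, L2norm_sq,
      L2norm_sq]
    push_cast; ring
  calc m * L2norm φ ^ 2 + L2norm (deriv φ) ^ 2 = (∫ z in Ioo (-1:ℝ) 1, conj (φ z) * b z).re := by
        rw [hid, Complex.ofReal_re]
    _ ≤ ∫ z in Ioo (-1:ℝ) 1, ‖φ z‖ * ‖b z‖ := by
        refine (Complex.re_le_norm _).trans ((norm_integral_le_integral_norm _).trans_eq ?_)
        simp only [norm_mul, Complex.norm_conj]
    _ ≤ L2norm φ * L2norm b := integral_norm_mul_norm_le_L2norm_mul hφ.continuous (by fun_prop)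
    _ = _ := mul_comm _ _

lemma one_le_knorm {k : ℤ × ℤ} (hk : k ≠ 0) : 1 ≤ knorm k := by
  have hsq : (1 : ℤ) ≤ k.1 ^ 2 + k.2 ^ 2 := by
    rcases k with ⟨k₁, k₂⟩
    have : k₁ ≠ 0 ∨ k₂ ≠ 0 := by simp only [ne_eq, Prod.mk_eq_zero] at hk; tauto
    rcases this with h | h
    · nlinarith [sq_nonneg k₂, Int.one_le_abs h, sq_abs k₁]
    · nlinarith [sq_nonneg k₁, Int.one_le_abs h, sq_abs k₂]
  rw [knorm, one_le_sqrt]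
  exact_mod_cast hsq

/-- `κ = |k|`; `p, q, r` stand for the `L²` norms of `φ, φ', φ''` and `A` for that of `a`. -/
lemma weighted_sum_le_seven_mul {κ p q r A : ℝ} (hp : 0 ≤ p) (hq : 0 ≤ q) (hA : 0 ≤ A)
    (henergy : κ ^ 2 * p ^ 2 + q ^ 2 ≤ A * p) (hr : r ≤ κ ^ 2 * p + A)
    (hκp : 1 ≤ κ ∨ κ = 0 ∧ p ≤ 2 * q) :
    κ ^ 2 * p + κ * (p + q) + (p + q + r) ≤ 7 * A := by
  rcases hκp with hκ1 | ⟨rfl, hpq⟩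
  · have hκ2 : 1 ≤ κ ^ 2 := one_le_pow₀ hκ1
    have hp' : κ ^ 2 * p ≤ A := by nlinarith
    have hq' : κ * q ≤ A := by
      have hq2 : q ^ 2 ≤ A * p := by nlinarith [sq_nonneg (κ * p)]
      have : (κ * q) ^ 2 ≤ A ^ 2 := by
        calc (κ * q) ^ 2 = κ ^ 2 * q ^ 2 := by ring
          _ ≤ κ ^ 2 * (A * p) := by gcongr
          _ = A * (κ ^ 2 * p) := by ring
          _ ≤ A * A := by gcongr
          _ = A ^ 2 := (sq A).symm
      nlinarith [mul_nonneg (zero_le_one.trans hκ1) hq]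
    linarith [mul_le_mul_of_nonneg_right (le_self_pow₀ hκ1 two_ne_zero) hp,
      mul_le_mul_of_nonneg_right hκ2 hp, mul_le_mul_of_nonneg_right hκ1 hq]
  · have hqA : q ≤ 2 * A := by nlinarith
    nlinarith

/-- Elliptic estimate for the Neumann problem `(|k|² - ∂²_z) φ = a` on `(-1,1)`,
with constant uniform in the frequency `k ∈ ℤ²`. -/
theorem elliptic_neumann_estimate :
    ∃ C > 0, ∀ (k : ℤ × ℤ) (φ a : ℝ → ℂ),
      ContDiff ℝ 2 φ →
      (∀ z ∈ Set.Ioo (-1:ℝ) 1,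
        ((knorm k ^ 2 : ℝ) : ℂ) * φ z - deriv (deriv φ) z = a z) →
      deriv φ (-1) = 0 → deriv φ 1 = 0 →
      (k = 0 → (∫ z in Set.Ioo (-1:ℝ) 1, φ z) = 0) →
      IntegrableOn (fun z => ‖a z‖ ^ 2) (Set.Ioo (-1:ℝ) 1) →
      knorm k ^ 2 * L2norm φ + knorm k * H1norm φ + H2norm φ ≤ C * L2norm a := by
  refine ⟨7, by norm_num, fun k φ a hφ hpde hl hr hmean _ => ?_⟩
  set κ := knorm k
  set b : ℝ → ℂ := fun z => ((κ ^ 2 : ℝ) : ℂ) * φ z - deriv (deriv φ) z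
  have hφ' := hφ.continuous_deriv one_le_two
  have hφ'' := hφ.deriv'.continuous_deriv le_rfl
  have hκ : 0 ≤ κ := sqrt_nonneg _
  have hsecond : L2norm (deriv (deriv φ)) ≤ κ ^ 2 * L2norm φ + L2norm b := by
    calc L2norm (deriv (deriv φ)) = L2norm fun z => ((κ ^ 2 : ℝ) : ℂ) * φ z - b z :=
          L2norm_congr fun z _ => by simp [b]
      _ ≤ _ := L2norm_sub_le (by fun_prop) (by fun_prop)
      _ = _ := by rw [L2norm_const_mul, Complex.norm_real, norm_of_nonneg (by positivity)]
  have hκp : 1 ≤ κ ∨ κ = 0 ∧ L2norm φ ≤ 2 * L2norm (deriv φ) := by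
    rcases eq_or_ne k 0 with rfl | hk
    · exact Or.inr ⟨by simp [κ, knorm],
        L2norm_le_two_mul_L2norm_deriv (hφ.of_le one_le_two) (hmean rfl)⟩
    · exact Or.inl (one_le_knorm hk)
  rw [L2norm_congr fun z hz => (hpde z hz).symm]
  calc _ ≤ κ ^ 2 * L2norm φ + κ * (L2norm φ + L2norm (deriv φ)) +
        (L2norm φ + L2norm (deriv φ) + L2norm (deriv (deriv φ))) := by
        gcongr
        exacts [H1norm_le hφ.continuous hφ', H2norm_le hφ.continuous hφ' hφ'']
    _ ≤ 7 * L2norm b := weighted_sum_le_seven_mul (L2norm_nonneg _) (L2norm_nonneg _)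
        (L2norm_nonneg _) (neumann_energy_le hφ hl hr _) hsecond hκp
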